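/- The class of subsets S of a Polish space X admitting a simultaneous continuous reduction to (L(C), L(C from N)) with the ⊤_S side-condition is closed under countable unions: if S = ⋃ᵢ Sᵢ and each Sᵢ has witnessing reductions fᵢ, then the map f placing f₀(x), f₁(x), f₂(x), ... as the right-diverging subtrees along the all-∨ leftmost branch is continuous and witnesses the property for S. -/

import Mathlib

/-- The alphabet {a, b, ∨, ¬}. -/
inductive A4 | la | lb | lor | lneg
deriving DecidableEq

instance : TopologicalSpace A4 := ⊥
instance : DiscreteTopology A4 := ⟨rfl⟩

/-- Infinite binary trees over {a, b, ∨, ¬}. -/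
abbrev Tree4 := List (Fin 2) → A4

/-- The length-`n` prefix of a branch. -/
def pre (β : ℕ → Fin 2) (n : ℕ) : List (Fin 2) := List.ofFn (fun i : Fin n => β i)

/-- `r` occurs infinitely often in the sequence `g`. -/
def InfOften (g : ℕ → ℕ) (r : ℕ) : Prop := ∀ m, ∃ n ≥ m, g n = r

/-- Parity condition: the maximal value occurring infinitely often is even. -/
def ParityOk (g : ℕ → ℕ) : Prop :=
  ∃ r, Even r ∧ InfOften g r ∧ ∀ r', InfOften g r' → r' ≤ r

/-- States of the unambiguous automaton `C` (including the states of `A_G` and `A_L`). -/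
inductive QC
  | P | N | Pv | Nv | Tv | TS | Top
  | g1 | g2 | top2 | bot1 | l1 | l0 | top0
deriving DecidableEq

def rankC : QC → ℕ
  | .P => 1 | .N => 1 | .Pv => 1 | .TS => 1
  | .Nv => 0 | .Tv => 0 | .Top => 0
  | .g1 => 1 | .g2 => 2 | .top2 => 2 | .bot1 => 1 | .l1 => 1 | .l0 => 0 | .top0 => 0

/-- Transition relation of `C`. -/
def deltaC : QC → A4 → QC → QC → Prop := fun q a q1 q2 =>
  match q, a with
  -- the formula layer
  | .P, .lor | .Pv, .lor => (q1 = .Tv ∧ q2 = .P) ∨ (q1 = .Pv ∧ q2 = .N)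
  | .N, .lor | .Nv, .lor => q1 = .Nv ∧ q2 = .N
  | .Tv, .lor | .TS, .lor => q1 = .Tv ∧ q2 = .TS
  | .P, .lneg => q1 = .Top ∧ q2 = .N
  | .N, .lneg => q1 = .Top ∧ q2 = .P
  | .TS, .lneg => q1 = .Top ∧ q2 = .TS
  | .TS, .la | .TS, .lb => q1 = .Top ∧ q2 = .Top
  | .Top, _ => q1 = .Top ∧ q2 = .Top
  -- on a or b, state P acts as g₁ of A_G, state N acts as l₁ of A_L
  | .P, .la => (q1 = .g2 ∧ q2 = .top2) ∨ (q1 = .l1 ∧ q2 = .g1)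
  | .P, .lb => q1 = .bot1 ∧ q2 = .bot1
  | .N, .la => q1 = .l1 ∧ q2 = .l0
  | .N, .lb => q1 = .top0 ∧ q2 = .top0
  -- the A_G component (letters other than a are treated like b)
  | .g1, .la | .g2, .la => (q1 = .g2 ∧ q2 = .top2) ∨ (q1 = .l1 ∧ q2 = .g1)
  | .g1, _ | .g2, _ => q1 = .bot1 ∧ q2 = .bot1
  -- the A_L component
  | .l1, .la | .l0, .la => q1 = .l1 ∧ q2 = .l0
  | .l1, _ | .l0, _ => q1 = .top0 ∧ q2 = .top0
  | .top2, _ => q1 = .top2 ∧ q2 = .top2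
  | .bot1, _ => q1 = .bot1 ∧ q2 = .bot1
  | .top0, _ => q1 = .top0 ∧ q2 = .top0
  -- no transitions in the remaining cases
  | _, _ => False

/-- A run of `C` on `t` starting in state `q0`. -/
def IsRunC (t : Tree4) (q0 : QC) (ρ : List (Fin 2) → QC) : Prop :=
  ρ [] = q0 ∧ ∀ v : List (Fin 2), deltaC (ρ v) (t v) (ρ (v ++ [0])) (ρ (v ++ [1]))

/-- An accepting run: the parity condition holds on every branch. -/
def AccRunC (t : Tree4) (q0 : QC) (ρ : List (Fin 2) → QC) : Prop :=
  IsRunC t q0 ρ ∧ ∀ β : ℕ → Fin 2, ParityOk (fun n => rankC (ρ (pre β n)))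

/-- `t` is accepted by `C` started in state `q0`. -/
def AcceptsFrom (q0 : QC) (t : Tree4) : Prop := ∃ ρ, AccRunC t q0 ρ

/-- The tree whose leftmost branch is labelled entirely ∨ and whose `i`-th
right-diverging subtree is `g i`. -/
def unionTree : (ℕ → Tree4) → List (Fin 2) → A4
  | _, [] => A4.lor
  | g, d :: w => if d = 0 then unionTree (fun n => g (n + 1)) w else g 0 w


/-! A run on the union tree walks down the all-∨ spine and hands the `i`-th subtree over in
some state. On the spine `P`, `P_∨`, `N` have rank 1 and `N_∨`, `⊤_∨` rank 0, so an accepting run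
from `P` cannot stay in `P`/`P_∨` forever: at some `i` it switches to `⊤_∨` and passes `P` to the
`i`-th subtree. Conversely, for `x ∈ ⋃ Sᵢ` with `i` least such that `x ∈ Sᵢ`, pass `N` to the
subtrees before `i`, `P` to the `i`-th and `⊤_S` to those after. A run from `N` is forced to pass
`N` to every subtree. -/

lemma infOften_add_iff (g : ℕ → ℕ) (m r : ℕ) :
    InfOften (fun n => g (m + n)) r ↔ InfOften g r := by
  constructor
  · intro h M
    obtain ⟨n, hn, he⟩ := h M
    exact ⟨m + n, by omega, he⟩
  · intro h M
    obtain ⟨n, hn, he⟩ := h (M + m)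
    refine ⟨n - m, by omega, ?_⟩
    show g (m + (n - m)) = r
    rwa [Nat.add_sub_cancel' (by omega)]

lemma parityOk_add_iff (g : ℕ → ℕ) (m : ℕ) :
    ParityOk (fun n => g (m + n)) ↔ ParityOk g := by
  simp only [ParityOk, infOften_add_iff]

lemma parityOk_iff_of_eventually_eq {g : ℕ → ℕ} {m c : ℕ} (h : ∀ n ≥ m, g n = c) :
    ParityOk g ↔ Even c := by
  have hinf : ∀ r, InfOften g r ↔ r = c := fun r =>
    ⟨fun hr => by obtain ⟨n, hn, rfl⟩ := hr m; exact h n hn,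
     fun hr M => ⟨max M m, le_max_left _ _, hr ▸ h _ (le_max_right _ _)⟩⟩
  simp only [ParityOk, hinf]
  exact ⟨fun ⟨r, he, hr, _⟩ => hr ▸ he, fun hc => ⟨c, hc, rfl, fun _ => le_of_eq⟩⟩

lemma pre_add (β : ℕ → Fin 2) (a b : ℕ) :
    pre β (a + b) = pre β a ++ pre (fun j => β (a + j)) b := by
  simp [pre, List.ofFn_add]

lemma pre_eq_replicate {β : ℕ → Fin 2} {n : ℕ} (h : ∀ j < n, β j = 0) :
    pre β n = List.replicate n 0 := by
  rw [pre, ← List.ofFn_const]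
  exact List.ofFn_inj.2 (funext fun j => h j j.isLt)

lemma pre_succ (β : ℕ → Fin 2) (n : ℕ) : pre β (n + 1) = pre β n ++ [β n] := by
  rw [pre_add]
  rfl

lemma AccRunC.cons {t : Tree4} {q : QC} {ρ : List (Fin 2) → QC} (h : AccRunC t q ρ)
    (d : Fin 2) : AccRunC (fun w => t (d :: w)) (ρ [d]) (fun w => ρ (d :: w)) := by
  refine ⟨⟨rfl, fun v => h.1.2 (d :: v)⟩, fun β => ?_⟩
  let β' : ℕ → Fin 2 := fun | 0 => d | n + 1 => β n
  have hpre : ∀ n, pre β' (1 + n) = d :: pre β n := fun n => by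
    rw [Nat.add_comm]
    simp [pre, List.ofFn_succ, β']
  simpa only [hpre] using (parityOk_add_iff _ 1).2 (h.2 β')

lemma AccRunC.append {t : Tree4} {q : QC} {ρ : List (Fin 2) → QC} (h : AccRunC t q ρ)
    (v : List (Fin 2)) : AccRunC (fun w => t (v ++ w)) (ρ v) (fun w => ρ (v ++ w)) := by
  induction v generalizing t q ρ with
  | nil => simpa only [List.nil_append, h.1.1] using h
  | cons d v ih => exact ih (h.cons d)

lemma AccRunC.acceptsFrom_subtree {t : Tree4} {q : QC} {ρ : List (Fin 2) → QC}
    (h : AccRunC t q ρ) (v : List (Fin 2)) : AcceptsFrom (ρ v) (fun w => t (v ++ w)) :=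
  ⟨_, h.append v⟩

def graft {α : Type*} (s : ℕ → α) (r : ℕ → List (Fin 2) → α) : List (Fin 2) → α
  | [] => s 0
  | d :: w => if d = 0 then graft (fun n => s (n + 1)) (fun n => r (n + 1)) w else r 0 w

section Graft

variable {α : Type*}

lemma graft_replicate (s : ℕ → α) (r : ℕ → List (Fin 2) → α) (k : ℕ) :
    graft s r (List.replicate k 0) = s k := by
  induction k generalizing s r with
  | zero => rfl
  | succ k ih => exact ih _ _

lemma graft_replicate_append_cons (s : ℕ → α) (r : ℕ → List (Fin 2) → α) (k : ℕ)
    {d : Fin 2} (hd : d ≠ 0) (w : List (Fin 2)) :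
    graft s r (List.replicate k 0 ++ d :: w) = r k w := by
  induction k generalizing s r with
  | zero => simp [graft, hd]
  | succ k ih => exact ih _ _

lemma graft_step {β : Type*} (R : α → β → α → α → Prop) {s : ℕ → α} {a : ℕ → β}
    {r : ℕ → List (Fin 2) → α} {g : ℕ → List (Fin 2) → β}
    (hs : ∀ k, R (s k) (a k) (s (k + 1)) (r k []))
    (hr : ∀ k w, R (r k w) (g k w) (r k (w ++ [0])) (r k (w ++ [1]))) (v : List (Fin 2)) :
    R (graft s r v) (graft a g v) (graft s r (v ++ [0])) (graft s r (v ++ [1])) := by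
  induction v generalizing s a r g with
  | nil => exact hs 0
  | cons d w ih =>
    by_cases hd : d = 0
    · simpa [graft, hd] using ih (fun k => hs (k + 1)) (fun k => hr (k + 1))
    · simpa [graft, hd] using hr 0 w

lemma parityOk_graft (rank : α → ℕ) {s : ℕ → α} {r : ℕ → List (Fin 2) → α}
    (hs : ParityOk fun n => rank (s n))
    (hr : ∀ k (β : ℕ → Fin 2), ParityOk fun n => rank (r k (pre β n))) (β : ℕ → Fin 2) :
    ParityOk fun n => rank (graft s r (pre β n)) := by
  by_cases hβ : ∃ n, β n ≠ 0
  · classical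
    obtain ⟨m, hm, hmin⟩ : ∃ m, β m ≠ 0 ∧ ∀ j < m, β j = 0 :=
      ⟨Nat.find hβ, Nat.find_spec hβ, fun j hj => not_not.1 (Nat.find_min hβ hj)⟩
    have hpre : ∀ n, pre β (m + 1 + n) =
        List.replicate m 0 ++ β m :: pre (fun j => β (m + 1 + j)) n := fun n => by
      rw [pre_add, pre_succ, pre_eq_replicate hmin]
      simp
    rw [← parityOk_add_iff _ (m + 1)]
    simpa only [hpre, graft_replicate_append_cons _ _ _ hm] using hr m _
  · push Not at hβ
    simpa only [pre_eq_replicate fun j _ => hβ j, graft_replicate] using hs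

lemma continuous_graft {X : Type*} [TopologicalSpace X] [TopologicalSpace α] (s : ℕ → α)
    {r : ℕ → X → List (Fin 2) → α} (hr : ∀ i, Continuous (r i)) :
    Continuous fun x => graft s (fun i => r i x) := by
  refine continuous_pi fun v => ?_
  induction v generalizing s r with
  | nil => exact continuous_const
  | cons d w ih =>
    by_cases hd : d = 0
    · simpa [graft, hd] using ih (fun n => s (n + 1)) fun i => hr (i + 1)
    · simpa [graft, hd, Function.comp_def] using (continuous_apply w).comp (hr 0)

end Graft

lemma unionTree_eq_graft (g : ℕ → Tree4) : unionTree g = graft (fun _ => A4.lor) g := by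
  funext v
  induction v generalizing g with
  | nil => rfl
  | cons d w ih => simp only [unionTree, graft, ih]

lemma unionTree_replicate (g : ℕ → Tree4) (k : ℕ) :
    unionTree g (List.replicate k 0) = A4.lor := by
  rw [unionTree_eq_graft, graft_replicate]

lemma unionTree_replicate_append_one (g : ℕ → Tree4) (k : ℕ) :
    (fun w => unionTree g (List.replicate k 0 ++ [1] ++ w)) = g k := by
  funext w
  rw [unionTree_eq_graft, List.append_assoc, List.singleton_append,
    graft_replicate_append_cons _ _ _ one_ne_zero]

lemma continuous_unionTree {X : Type*} [TopologicalSpace X] {f : ℕ → X → Tree4}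
    (hf : ∀ i, Continuous (f i)) : Continuous fun x => unionTree fun i => f i x := by
  simpa only [unionTree_eq_graft] using continuous_graft _ hf

section UnionTree

variable {g : ℕ → Tree4}

lemma IsRunC.unionTree_spine {q : QC} {ρ : List (Fin 2) → QC} (h : IsRunC (unionTree g) q ρ)
    (k : ℕ) : deltaC (ρ (List.replicate k 0)) A4.lor (ρ (List.replicate (k + 1) 0))
      (ρ (List.replicate k 0 ++ [1])) := by
  simpa only [unionTree_replicate, ← List.replicate_succ'] using h.2 (List.replicate k 0)

lemma AccRunC.acceptsFrom_unionTree_child {q : QC} {ρ : List (Fin 2) → QC}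
    (h : AccRunC (unionTree g) q ρ) (k : ℕ) :
    AcceptsFrom (ρ (List.replicate k 0 ++ [1])) (g k) := by
  have hsub := h.acceptsFrom_subtree (List.replicate k 0 ++ [1])
  rwa [unionTree_replicate_append_one] at hsub

lemma acceptsFrom_unionTree (s t : ℕ → QC) (hs : ∀ k, deltaC (s k) A4.lor (s (k + 1)) (t k))
    (ht : ∀ k, AcceptsFrom (t k) (g k)) (hpar : ParityOk fun n => rankC (s n)) :
    AcceptsFrom (s 0) (unionTree g) := by
  choose r hr using ht
  have hroot : ∀ k, r k [] = t k := fun k => (hr k).1.1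
  refine ⟨graft s r, ⟨rfl, ?_⟩, parityOk_graft rankC hpar fun k => (hr k).2⟩
  rw [unionTree_eq_graft]
  exact graft_step deltaC (fun k => hroot k ▸ hs k) fun k => (hr k).1.2

lemma acceptsFrom_unionTree_of_const {q q' t : QC} (h0 : deltaC q A4.lor q' t)
    (h1 : deltaC q' A4.lor q' t) (hq' : rankC q' = 0) (ht : ∀ k, AcceptsFrom t (g k)) :
    AcceptsFrom q (unionTree g) := by
  refine acceptsFrom_unionTree (fun | 0 => q | _ + 1 => q') (fun _ => t)
    (by rintro (_ | k); exacts [h0, h1]) ht ?_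
  refine (parityOk_iff_of_eventually_eq (m := 1) ?_).2 ⟨0, rfl⟩
  rintro (_ | n) hn
  · omega
  · exact hq'

lemma acceptsFrom_TS_unionTree (h : ∀ i, AcceptsFrom QC.TS (g i)) :
    AcceptsFrom QC.TS (unionTree g) :=
  acceptsFrom_unionTree_of_const (q' := .Tv) ⟨rfl, rfl⟩ ⟨rfl, rfl⟩ rfl h

lemma acceptsFrom_N_unionTree_iff :
    AcceptsFrom QC.N (unionTree g) ↔ ∀ i, AcceptsFrom QC.N (g i) := by
  constructor
  · rintro ⟨ρ, hρ⟩ i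
    have hspine : ∀ k, ρ (List.replicate k 0) = .N ∨ ρ (List.replicate k 0) = .Nv := by
      intro k
      induction k with
      | zero => exact .inl hρ.1.1
      | succ k ih =>
        have hstep := hρ.1.unionTree_spine k
        rcases ih with h | h <;> rw [h] at hstep <;> exact .inr hstep.1
    have hstep := hρ.1.unionTree_spine i
    have hchild : ρ (List.replicate i 0 ++ [1]) = .N := by
      rcases hspine i with h | h <;> rw [h] at hstep <;> exact hstep.2
    simpa only [hchild] using hρ.acceptsFrom_unionTree_child i
  · intro h
    exact acceptsFrom_unionTree_of_const (q' := .Nv) ⟨rfl, rfl⟩ ⟨rfl, rfl⟩ rfl h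

lemma exists_acceptsFrom_P_of_unionTree (h : AcceptsFrom QC.P (unionTree g)) :
    ∃ i, AcceptsFrom QC.P (g i) := by
  obtain ⟨ρ, hρ⟩ := h
  by_contra! hno
  -- the spine would then stay in `P`/`P_∨`, of odd rank 1 forever
  have hspine : ∀ k, ρ (List.replicate k 0) = .P ∨ ρ (List.replicate k 0) = .Pv := by
    intro k
    induction k with
    | zero => exact .inl hρ.1.1
    | succ k ih =>
      have hstep := hρ.1.unionTree_spine k
      have hchild := hρ.acceptsFrom_unionTree_child k
      rcases ih with h | h <;> rw [h] at hstep <;> rcases hstep with ⟨-, hP⟩ | ⟨hPv, -⟩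
      all_goals first | exact .inr hPv | exact absurd (hP ▸ hchild) (hno k)
  have hrank : ∀ n, rankC (ρ (pre (fun _ => 0) n)) = 1 := fun n => by
    rw [pre_eq_replicate fun _ _ => rfl]
    rcases hspine n with h | h <;> rw [h] <;> rfl
  exact Nat.not_even_one ((parityOk_iff_of_eventually_eq (m := 0) fun n _ => hrank n).1 (hρ.2 _))

lemma acceptsFrom_P_unionTree {i : ℕ} (hlt : ∀ j < i, AcceptsFrom QC.N (g j))
    (hi : AcceptsFrom QC.P (g i)) (hgt : ∀ j, i < j → AcceptsFrom QC.TS (g j)) :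
    AcceptsFrom QC.P (unionTree g) := by
  refine acceptsFrom_unionTree (fun | 0 => .P | k + 1 => if i < k + 1 then .Tv else .Pv)
    (fun k => if k < i then .N else if k = i then .P else .TS) (fun k => ?_) (fun k => ?_) ?_
  · rcases k with _ | k <;> dsimp only <;> split_ifs <;> first | omega | simp [deltaC]
  · rcases lt_trichotomy k i with h | rfl | h
    · simpa [h] using hlt k h
    · simpa using hi
    · simpa [h.not_gt, h.ne'] using hgt k h
  · refine (parityOk_iff_of_eventually_eq (m := i + 1) (c := 0) ?_).2 ⟨0, rfl⟩
    rintro (_ | n) hn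
    · omega
    · simp [show i < n + 1 by omega, rankC]

lemma acceptsFrom_P_unionTree_iff (hTS : ∀ i, AcceptsFrom QC.TS (g i))
    (hPN : ∀ i, AcceptsFrom QC.P (g i) ∨ AcceptsFrom QC.N (g i)) :
    AcceptsFrom QC.P (unionTree g) ↔ ∃ i, AcceptsFrom QC.P (g i) := by
  classical
  refine ⟨exists_acceptsFrom_P_of_unionTree, fun h => ?_⟩
  exact acceptsFrom_P_unionTree (i := Nat.find h)
    (fun j hj => (hPN j).resolve_left (Nat.find_min h hj)) (Nat.find_spec h) fun j _ => hTS j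

end UnionTree

theorem star_closed_under_union_general (X : Type) [TopologicalSpace X]
    (Si : ℕ → Set X) (f : ℕ → X → Tree4) (hf : ∀ i, Continuous (f i))
    (h1 : ∀ i x, AcceptsFrom QC.P (f i x) ↔ x ∈ Si i)
    (h2 : ∀ i x, AcceptsFrom QC.N (f i x) ↔ x ∉ Si i)
    (h3 : ∀ i x, AcceptsFrom QC.TS (f i x)) :
    Continuous (fun x => unionTree (fun i => f i x)) ∧
    (∀ x, AcceptsFrom QC.P (unionTree (fun i => f i x)) ↔ x ∈ ⋃ i, Si i) ∧
    (∀ x, AcceptsFrom QC.N (unionTree (fun i => f i x)) ↔ x ∉ ⋃ i, Si i) ∧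
    (∀ x, AcceptsFrom QC.TS (unionTree (fun i => f i x))) := by
  refine ⟨continuous_unionTree hf, fun x => ?_, fun x => ?_,
    fun x => acceptsFrom_TS_unionTree fun i => h3 i x⟩
  · rw [acceptsFrom_P_unionTree_iff (fun i => h3 i x)
      fun i => (em (x ∈ Si i)).imp (h1 i x).2 (h2 i x).2]
    simp only [h1, Set.mem_iUnion]
  · rw [acceptsFrom_N_unionTree_iff]
    simp only [h2, Set.mem_iUnion, not_exists]

/-- Closure of the simultaneous-reduction property (*) under countable unions. -/
theorem star_closed_under_union (X : Type) [TopologicalSpace X] [PolishSpace X]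
    (Si : ℕ → Set X) (f : ℕ → X → Tree4) (hf : ∀ i, Continuous (f i))
    (h1 : ∀ i x, AcceptsFrom QC.P (f i x) ↔ x ∈ Si i)
    (h2 : ∀ i x, AcceptsFrom QC.N (f i x) ↔ x ∉ Si i)
    (h3 : ∀ i x, AcceptsFrom QC.TS (f i x)) :
    Continuous (fun x => unionTree (fun i => f i x)) ∧
    (∀ x, AcceptsFrom QC.P (unionTree (fun i => f i x)) ↔ x ∈ ⋃ i, Si i) ∧
    (∀ x, AcceptsFrom QC.N (unionTree (fun i => f i x)) ↔ x ∉ ⋃ i, Si i) ∧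
    (∀ x, AcceptsFrom QC.TS (unionTree (fun i => f i x))) :=
  star_closed_under_union_general X Si f hf h1 h2 h3
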